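/- arXiv:2005.03169 — 3 statements merged into one kernel-verified Lean document; each statement's English description precedes it below -/
import Mathlib

section
/- Let Xo, Xu, A be finite nonempty sets, c : Xo × Xu × A → ℝ a cost function, 0 ≤ β < 1. Suppose the transition kernel factorizes: p((xo',xu') | (xo,xu), a) = po(xo'|xo,a) · pu(xu'|xu,a), where po and pu are probability kernels. Let b0 be a probability mass function on Xu and define c̃(xo,a) = Σ_{xu} b0(xu) c(xo,xu,a). Let ũ* : Xo → ℝ be the fixed point of the virtual-belief Bellman operator (L̃ u)(xo) = min_a (c̃(xo,a) + β Σ_{xo'} u(xo') po(xo'|xo,a)), and let v* : Xo × Xu → ℝ be the fixed point of the full-information Bellman operator (L v)(xo,xu) = min_a (c(xo,xu,a) + β Σ_{xo',xu'} v(xo',xu') po(xo'|xo,a) pu(xu'|xu,a)). Define C̄ = max over xo, xu, xu', a of (c(xo,xu,a) − c(xo,xu',a)). Then for all xo, xu: ũ*(xo) − v*(xo,xu) ≤ C̄ / (1 − β) and v*(xo,xu) − ũ*(xo) ≤ C̄ / (1 − β). -/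
/-- Comparison between the full-information and virtual-belief fixed points
under a factorized transition kernel. -/
theorem virtual_belief_vs_full_information_bound
    {Xo Xu A : Type*} [Fintype Xo] [Fintype Xu] [Fintype A]
    [Nonempty Xo] [Nonempty Xu] [Nonempty A]
    (c : Xo → Xu → A → ℝ)
    (po : Xo → A → Xo → ℝ) (pu : Xu → A → Xu → ℝ)
    (hpo0 : ∀ xo a xo', 0 ≤ po xo a xo') (hpo1 : ∀ xo a, ∑ xo', po xo a xo' = 1)
    (hpu0 : ∀ xu a xu', 0 ≤ pu xu a xu') (hpu1 : ∀ xu a, ∑ xu', pu xu a xu' = 1)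
    (β : ℝ) (hβ0 : 0 ≤ β) (hβ1 : β < 1)
    (b0 : Xu → ℝ) (hb0 : ∀ xu, 0 ≤ b0 xu) (hb1 : ∑ xu, b0 xu = 1)
    (utilde : Xo → ℝ)
    (hutilde : ∀ xo, utilde xo =
      Finset.univ.inf' Finset.univ_nonempty
        (fun a => (∑ xu, b0 xu * c xo xu a) + β * ∑ xo', utilde xo' * po xo a xo'))
    (vstar : Xo → Xu → ℝ)
    (hvstar : ∀ xo xu, vstar xo xu =
      Finset.univ.inf' Finset.univ_nonempty
        (fun a => c xo xu a +
          β * ∑ xo', ∑ xu', vstar xo' xu' * (po xo a xo' * pu xu a xu')))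
    (Cbar : ℝ)
    (hCbar : Cbar = Finset.univ.sup' Finset.univ_nonempty
      (fun q : Xo × Xu × Xu × A => c q.1 q.2.1 q.2.2.2 - c q.1 q.2.2.1 q.2.2.2)) :
    ∀ xo xu, utilde xo - vstar xo xu ≤ Cbar / (1 - β) ∧
      vstar xo xu - utilde xo ≤ Cbar / (1 - β) := by
  have hβ' : 0 < 1 - β := by linarith
  set M : ℝ := (Finset.univ : Finset (Xo × Xu)).sup' Finset.univ_nonempty
    (fun p => |utilde p.1 - vstar p.1 p.2|) with hM
  have hCb : ∀ xo xu xu' a, c xo xu a - c xo xu' a ≤ Cbar := by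
    intro xo xu xu' a
    rw [hCbar]
    exact Finset.le_sup' (fun q : Xo × Xu × Xu × A =>
      c q.1 q.2.1 q.2.2.2 - c q.1 q.2.2.1 q.2.2.2) (Finset.mem_univ (xo, xu, xu', a))
  have hMle : ∀ xo xu, |utilde xo - vstar xo xu| ≤ M := fun xo xu =>
    Finset.le_sup' (fun p : Xo × Xu => |utilde p.1 - vstar p.1 p.2|)
      (Finset.mem_univ (xo, xu))
  -- key: the discounted future terms differ by at most M
  have key : ∀ xo (xu : Xu) a,
      |(∑ xo', utilde xo' * po xo a xo') -
        ∑ xo', ∑ xu', vstar xo' xu' * (po xo a xo' * pu xu a xu')| ≤ M := by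
    intro xo xu a
    have h1 : ∑ xo', utilde xo' * po xo a xo'
        = ∑ xo', ∑ xu', utilde xo' * (po xo a xo' * pu xu a xu') := by
      refine Finset.sum_congr rfl fun xo' _ => ?_
      simp only [← mul_assoc]
      rw [← Finset.mul_sum, hpu1, mul_one]
    rw [h1, ← Finset.sum_sub_distrib]
    simp only [← Finset.sum_sub_distrib, ← sub_mul]
    calc |∑ xo', ∑ xu', (utilde xo' - vstar xo' xu') * (po xo a xo' * pu xu a xu')|
        ≤ ∑ xo', |∑ xu', (utilde xo' - vstar xo' xu') * (po xo a xo' * pu xu a xu')| :=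
          Finset.abs_sum_le_sum_abs _ _
      _ ≤ ∑ xo', ∑ xu', |(utilde xo' - vstar xo' xu') * (po xo a xo' * pu xu a xu')| :=
          Finset.sum_le_sum fun xo' _ => Finset.abs_sum_le_sum_abs _ _
      _ ≤ ∑ xo', ∑ xu', M * (po xo a xo' * pu xu a xu') := by
          refine Finset.sum_le_sum fun xo' _ => Finset.sum_le_sum fun xu' _ => ?_
          rw [abs_mul, abs_of_nonneg (mul_nonneg (hpo0 _ _ _) (hpu0 _ _ _))]
          exact mul_le_mul_of_nonneg_right (hMle _ _)
            (mul_nonneg (hpo0 _ _ _) (hpu0 _ _ _))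
      _ = M := by
          have h2 : ∀ xo', ∑ xu', M * (po xo a xo' * pu xu a xu') = M * po xo a xo' := by
            intro xo'
            simp only [← mul_assoc]
            rw [← Finset.mul_sum, hpu1, mul_one]
          simp only [h2]
          rw [← Finset.mul_sum, hpo1, mul_one]
  -- main contraction-type bound
  have main : ∀ xo xu, |utilde xo - vstar xo xu| ≤ Cbar + β * M := by
    intro xo xu
    rw [abs_le]
    constructor
    · -- vstar - utilde ≤ Cbar + β M : pick a attaining utilde's inf
      obtain ⟨a, -, ha⟩ := Finset.exists_mem_eq_inf' (Finset.univ_nonempty (α := A))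
        (fun a => (∑ xu, b0 xu * c xo xu a) + β * ∑ xo', utilde xo' * po xo a xo')
      have hu : utilde xo = (∑ xu'', b0 xu'' * c xo xu'' a)
          + β * ∑ xo', utilde xo' * po xo a xo' := by rw [hutilde xo, ha]
      have hv : vstar xo xu ≤ c xo xu a +
          β * ∑ xo', ∑ xu', vstar xo' xu' * (po xo a xo' * pu xu a xu') := by
        rw [hvstar xo xu]
        exact Finset.inf'_le _ (Finset.mem_univ a)
      have hc : c xo xu a - ∑ xu'', b0 xu'' * c xo xu'' a ≤ Cbar := by
        have : c xo xu a - ∑ xu'', b0 xu'' * c xo xu'' a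
            = ∑ xu'', b0 xu'' * (c xo xu a - c xo xu'' a) := by
          simp only [mul_sub, Finset.sum_sub_distrib, ← Finset.sum_mul, hb1, one_mul]
        rw [this]
        calc ∑ xu'', b0 xu'' * (c xo xu a - c xo xu'' a)
            ≤ ∑ xu'', b0 xu'' * Cbar :=
            Finset.sum_le_sum fun xu'' _ =>
              mul_le_mul_of_nonneg_left (hCb xo xu xu'' a) (hb0 xu'')
          _ = Cbar := by rw [← Finset.sum_mul, hb1, one_mul]
      have hk := (abs_le.mp (key xo xu a)).1
      nlinarith [hk, hc, hu, hv]
    · -- utilde - vstar ≤ Cbar + β M : pick a attaining vstar's inf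
      obtain ⟨a, -, ha⟩ := Finset.exists_mem_eq_inf' (Finset.univ_nonempty (α := A))
        (fun a => c xo xu a +
          β * ∑ xo', ∑ xu', vstar xo' xu' * (po xo a xo' * pu xu a xu'))
      have hv : vstar xo xu = c xo xu a +
          β * ∑ xo', ∑ xu', vstar xo' xu' * (po xo a xo' * pu xu a xu') := by
        rw [hvstar xo xu, ha]
      have hu : utilde xo ≤ (∑ xu'', b0 xu'' * c xo xu'' a)
          + β * ∑ xo', utilde xo' * po xo a xo' := by
        rw [hutilde xo]
        exact Finset.inf'_le _ (Finset.mem_univ a)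
      have hc : (∑ xu'', b0 xu'' * c xo xu'' a) - c xo xu a ≤ Cbar := by
        have : (∑ xu'', b0 xu'' * c xo xu'' a) - c xo xu a
            = ∑ xu'', b0 xu'' * (c xo xu'' a - c xo xu a) := by
          simp only [mul_sub, Finset.sum_sub_distrib, ← Finset.sum_mul, hb1, one_mul]
        rw [this]
        calc ∑ xu'', b0 xu'' * (c xo xu'' a - c xo xu a)
            ≤ ∑ xu'', b0 xu'' * Cbar :=
            Finset.sum_le_sum fun xu'' _ =>
              mul_le_mul_of_nonneg_left (hCb xo xu'' xu a) (hb0 xu'')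
          _ = Cbar := by rw [← Finset.sum_mul, hb1, one_mul]
      have hk := (abs_le.mp (key xo xu a)).2
      nlinarith [hk, hc, hu, hv]
  have hMb : M ≤ Cbar + β * M := by
    rw [hM]
    exact Finset.sup'_le _ _ fun p _ => main p.1 p.2
  have hMfin : M ≤ Cbar / (1 - β) := by
    rw [le_div_iff₀ hβ']
    nlinarith
  intro xo xu
  have h := abs_le.mp ((hMle xo xu).trans hMfin)
  exact ⟨h.2, by linarith [h.1]⟩
end

section
/- Let Xo, Xu, A be finite nonempty sets with a factorized transition kernel p((xo',xu')|(xo,xu),a) = po(xo'|xo,a) pu(xu'|xu,a), and suppose the cost function does not depend on the unobservable substate: c(xo,xu,a) = c(xo,xu',a) for all xu, xu'. Then the virtual-belief fixed point ũ* and the full-information fixed point v* coincide: v*(xo,xu) = ũ*(xo) for all xo, xu. -/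
lemma abs_inf'_sub_inf'_le {A : Type*} {s : Finset A} (hs : s.Nonempty)
    (f g : A → ℝ) (K : ℝ) (h : ∀ a ∈ s, |f a - g a| ≤ K) :
    |s.inf' hs f - s.inf' hs g| ≤ K := by
  rw [abs_sub_le_iff]
  constructor
  · obtain ⟨a, ha, hag⟩ := s.exists_mem_eq_inf' hs g
    have h1 : s.inf' hs f ≤ f a := Finset.inf'_le _ ha
    have h2 := (abs_sub_le_iff.mp (h a ha)).1
    rw [hag]; linarith
  · obtain ⟨a, ha, haf⟩ := s.exists_mem_eq_inf' hs f
    have h1 : s.inf' hs g ≤ g a := Finset.inf'_le _ ha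
    have h2 := (abs_sub_le_iff.mp (h a ha)).2
    rw [haf]; linarith

/-- If the cost does not depend on the unobservable substate, the virtual-belief
and full-information fixed points coincide. -/
theorem virtual_belief_exact_when_cost_independent
    {Xo Xu A : Type*} [Fintype Xo] [Fintype Xu] [Fintype A]
    [Nonempty Xo] [Nonempty Xu] [Nonempty A]
    (c : Xo → Xu → A → ℝ)
    (hc : ∀ xo xu xu' a, c xo xu a = c xo xu' a)
    (po : Xo → A → Xo → ℝ) (pu : Xu → A → Xu → ℝ)
    (hpo0 : ∀ xo a xo', 0 ≤ po xo a xo') (hpo1 : ∀ xo a, ∑ xo', po xo a xo' = 1)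
    (hpu0 : ∀ xu a xu', 0 ≤ pu xu a xu') (hpu1 : ∀ xu a, ∑ xu', pu xu a xu' = 1)
    (β : ℝ) (hβ0 : 0 ≤ β) (hβ1 : β < 1)
    (b0 : Xu → ℝ) (hb0 : ∀ xu, 0 ≤ b0 xu) (hb1 : ∑ xu, b0 xu = 1)
    (utilde : Xo → ℝ)
    (hutilde : ∀ xo, utilde xo =
      Finset.univ.inf' Finset.univ_nonempty
        (fun a => (∑ xu, b0 xu * c xo xu a) + β * ∑ xo', utilde xo' * po xo a xo'))
    (vstar : Xo → Xu → ℝ)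
    (hvstar : ∀ xo xu, vstar xo xu =
      Finset.univ.inf' Finset.univ_nonempty
        (fun a => c xo xu a +
          β * ∑ xo', ∑ xu', vstar xo' xu' * (po xo a xo' * pu xu a xu'))) :
    ∀ xo xu, vstar xo xu = utilde xo := by
  set D : ℝ := Finset.univ.sup' Finset.univ_nonempty
      (fun p : Xo × Xu => |vstar p.1 p.2 - utilde p.1|) with hD
  have hD0 : 0 ≤ D := by
    obtain ⟨p⟩ : Nonempty (Xo × Xu) := inferInstance
    exact le_trans (abs_nonneg _)
      (Finset.le_sup' (fun p : Xo × Xu => |vstar p.1 p.2 - utilde p.1|) (Finset.mem_univ p))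
  -- each pointwise difference is ≤ β * D
  have key : ∀ xo xu, |vstar xo xu - utilde xo| ≤ β * D := by
    intro xo xu
    rw [hvstar xo xu, hutilde xo]
    apply abs_inf'_sub_inf'_le
    intro a _
    -- cost term equality
    have hcost : (∑ xu', b0 xu' * c xo xu' a) = c xo xu a := by
      have : ∀ xu', b0 xu' * c xo xu' a = b0 xu' * c xo xu a := fun xu' => by
        rw [hc xo xu' xu a]
      rw [Finset.sum_congr rfl (fun xu' _ => this xu'), ← Finset.sum_mul, hb1, one_mul]
    have hT : (∑ xo', utilde xo' * po xo a xo') =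
        ∑ xo', ∑ xu', utilde xo' * (po xo a xo' * pu xu a xu') := by
      apply Finset.sum_congr rfl
      intro xo' _
      rw [← Finset.mul_sum]
      have : (∑ xu', po xo a xo' * pu xu a xu') = po xo a xo' := by
        rw [← Finset.mul_sum, hpu1, mul_one]
      rw [this]
    have hdiff : (c xo xu a + β * ∑ xo', ∑ xu', vstar xo' xu' * (po xo a xo' * pu xu a xu'))
        - ((∑ xu', b0 xu' * c xo xu' a) + β * ∑ xo', utilde xo' * po xo a xo')
        = β * ∑ xo', ∑ xu', (vstar xo' xu' - utilde xo') * (po xo a xo' * pu xu a xu') := by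
      rw [hcost, hT]
      simp_rw [sub_mul, Finset.sum_sub_distrib]
      ring
    rw [hdiff, abs_mul, abs_of_nonneg hβ0]
    apply mul_le_mul_of_nonneg_left _ hβ0
    calc |∑ xo', ∑ xu', (vstar xo' xu' - utilde xo') * (po xo a xo' * pu xu a xu')|
        ≤ ∑ xo', ∑ xu', |(vstar xo' xu' - utilde xo') * (po xo a xo' * pu xu a xu')| := by
          apply le_trans (Finset.abs_sum_le_sum_abs _ _)
          exact Finset.sum_le_sum fun xo' _ => Finset.abs_sum_le_sum_abs _ _
      _ ≤ ∑ xo', ∑ xu', D * (po xo a xo' * pu xu a xu') := by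
          apply Finset.sum_le_sum; intro xo' _
          apply Finset.sum_le_sum; intro xu' _
          rw [abs_mul, abs_of_nonneg (mul_nonneg (hpo0 xo a xo') (hpu0 xu a xu'))]
          apply mul_le_mul_of_nonneg_right _ (mul_nonneg (hpo0 xo a xo') (hpu0 xu a xu'))
          exact Finset.le_sup' (fun p : Xo × Xu => |vstar p.1 p.2 - utilde p.1|)
            (Finset.mem_univ (xo', xu'))
      _ = D := by
          have : ∀ xo', ∑ xu', D * (po xo a xo' * pu xu a xu') = D * po xo a xo' := by
            intro xo'
            rw [show (fun xu' => D * (po xo a xo' * pu xu a xu')) =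
              (fun xu' => D * po xo a xo' * pu xu a xu') from funext fun _ => by ring]
            rw [← Finset.mul_sum, hpu1, mul_one]
          rw [Finset.sum_congr rfl (fun xo' _ => this xo'), ← Finset.mul_sum, hpo1, mul_one]
  have hDle : D ≤ β * D := by
    apply Finset.sup'_le
    intro p _
    exact key p.1 p.2
  have hDzero : D = 0 := by nlinarith
  intro xo xu
  have := key xo xu
  rw [hDzero] at this
  have : |vstar xo xu - utilde xo| ≤ 0 := by simpa using this
  have := abs_nonneg (vstar xo xu - utilde xo)
  linarith [abs_eq_zero.mp (le_antisymm ‹|vstar xo xu - utilde xo| ≤ 0› this)]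
end

section
/- Let Xo, Xu, A be finite nonempty sets with factorized kernel p((xo',xu')|(xo,xu),a) = po(xo'|xo,a) pu(xu'|xu,a), cost c : Xo × Xu × A → ℝ, discount 0 ≤ β < 1, and b0 a pmf on Xu. Let L̃ be the virtual-belief Bellman operator (L̃ u)(xo) = min_a (Σ_{xu} b0(xu) c(xo,xu,a) + β Σ_{xo'} u(xo') po(xo'|xo,a)), and for a function u : Xo → ℝ let (L u)(xo, xu) = min_a (c(xo,xu,a) + β Σ_{xo'} u(xo') po(xo'|xo,a)) denote the full-information operator applied to the lift of u. Then for all xo and xu: (L̃ u)(xo) − (L u)(xo, xu) ≤ max over xo'', x̂u, x̂u', a of (c(xo'', x̂u, a) − c(xo'', x̂u', a)). -/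
/-- Key per-step estimate: for a function of the observable substate only, the
virtual-belief and full-information Bellman operators differ by at most the
cost-sensitivity constant. -/
theorem virtual_belief_per_step_estimate
    {Xo Xu A : Type*} [Fintype Xo] [Fintype Xu] [Fintype A]
    [Nonempty Xo] [Nonempty Xu] [Nonempty A]
    (c : Xo → Xu → A → ℝ)
    (po : Xo → A → Xo → ℝ) (pu : Xu → A → Xu → ℝ)
    (hpo0 : ∀ xo a xo', 0 ≤ po xo a xo') (hpo1 : ∀ xo a, ∑ xo', po xo a xo' = 1)
    (hpu0 : ∀ xu a xu', 0 ≤ pu xu a xu') (hpu1 : ∀ xu a, ∑ xu', pu xu a xu' = 1)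
    (β : ℝ) (hβ0 : 0 ≤ β) (hβ1 : β < 1)
    (b0 : Xu → ℝ) (hb0 : ∀ xu, 0 ≤ b0 xu) (hb1 : ∑ xu, b0 xu = 1)
    (u : Xo → ℝ)
    (Ltilde : Xo → ℝ)
    (hLtilde : ∀ xo, Ltilde xo =
      Finset.univ.inf' Finset.univ_nonempty
        (fun a => (∑ xu, b0 xu * c xo xu a) + β * ∑ xo', u xo' * po xo a xo'))
    (Lfull : Xo → Xu → ℝ)
    (hLfull : ∀ xo xu, Lfull xo xu =
      Finset.univ.inf' Finset.univ_nonempty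
        (fun a => c xo xu a + β * ∑ xo', u xo' * po xo a xo')) :
    ∀ xo xu, Ltilde xo - Lfull xo xu ≤
      Finset.univ.sup' Finset.univ_nonempty
        (fun q : Xo × Xu × Xu × A => c q.1 q.2.1 q.2.2.2 - c q.1 q.2.2.1 q.2.2.2) := by
  intro xo xu
  set M := Finset.univ.sup' Finset.univ_nonempty
      (fun q : Xo × Xu × Xu × A => c q.1 q.2.1 q.2.2.2 - c q.1 q.2.2.1 q.2.2.2) with hM
  -- pick minimizer of Lfull
  obtain ⟨a, -, ha⟩ := Finset.exists_mem_eq_inf' (Finset.univ_nonempty (α := A))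
    (fun a => c xo xu a + β * ∑ xo', u xo' * po xo a xo')
  rw [hLfull, ha]
  have h1 : Ltilde xo ≤ (∑ xu', b0 xu' * c xo xu' a) + β * ∑ xo', u xo' * po xo a xo' := by
    rw [hLtilde]
    exact Finset.inf'_le _ (Finset.mem_univ a)
  have h2 : (∑ xu', b0 xu' * c xo xu' a) - c xo xu a ≤ M := by
    have : (∑ xu', b0 xu' * c xo xu' a) - c xo xu a
        = ∑ xu', b0 xu' * (c xo xu' a - c xo xu a) := by
      rw [Finset.sum_congr rfl (fun x _ => mul_sub (b0 x) (c xo x a) (c xo xu a)),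
        Finset.sum_sub_distrib, ← Finset.sum_mul, hb1, one_mul]
    rw [this]
    calc ∑ xu', b0 xu' * (c xo xu' a - c xo xu a)
        ≤ ∑ xu', b0 xu' * M := by
          refine Finset.sum_le_sum fun x _ => mul_le_mul_of_nonneg_left ?_ (hb0 x)
          exact Finset.le_sup' (f := fun q : Xo × Xu × Xu × A =>
            c q.1 q.2.1 q.2.2.2 - c q.1 q.2.2.1 q.2.2.2) (Finset.mem_univ (xo, x, xu, a))
      _ = M := by rw [← Finset.sum_mul, hb1, one_mul]
  linarith
end
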